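/- arXiv:2301.13314 — 5 statements merged into one kernel-verified Lean document; each statement's English description precedes it below -/
import Mathlib

section
/- Let g be ρ-weakly convex on a closed convex set X with subgradients bounded in norm by M, and suppose there exist θ > 0 and ρ̂ > ρ such that for every x ∈ X with g(x) = 0 there exists y ∈ X with g(y) + (ρ̂/2)‖y − x‖² ≤ −θ. Then for every x ∈ L := {x ∈ X : g(x) = 0}, every ζ_g ∈ ∂g(x), and every u ∈ N_X(x), one has ‖ζ_g + u‖ ≥ ν := √(2θ(ρ̂ − ρ)). -/
/-!
Fix `x ∈ L` and let `y` be its Slater point, `t = ‖y − x‖`. The function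
`g + (ρ̂/2)‖· − x‖² + δ_X` is `(ρ̂ − ρ)`-strongly convex with subgradient `ζ + u` at `x`, so
`−θ ≥ ⟪ζ + u, y − x⟫ + (ρ̂ − ρ)/2 · t² ≥ −‖ζ + u‖ t + (ρ̂ − ρ)/2 · t²`.
By AM–GM, `θ + (ρ̂ − ρ)/2 · t² ≥ √(2θ(ρ̂ − ρ)) t`, and `t > 0` because `θ > 0`.
-/

noncomputable section

/-- The normal cone of a convex set `X` at a point `x`. -/
def normalCone {d : ℕ} (X : Set (EuclideanSpace ℝ (Fin d)))
    (x : EuclideanSpace ℝ (Fin d)) : Set (EuclideanSpace ℝ (Fin d)) :=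
  {u | ∀ y ∈ X, (inner ℝ u (y - x) : ℝ) ≤ 0}

open RealInnerProductSpace

theorem add_inner_add_half_mul_sq_le_of_mem_normalCone {d : ℕ}
    {X : Set (EuclideanSpace ℝ (Fin d))} {g : EuclideanSpace ℝ (Fin d) → ℝ}
    {x y ζ u : EuclideanSpace ℝ (Fin d)} {ρ : ℝ} (ρh : ℝ) (hy : y ∈ X)
    (hwc : g x + ⟪ζ, y - x⟫ - ρ / 2 * ‖y - x‖ ^ 2 ≤ g y) (hu : u ∈ normalCone X x) :
    g x + ⟪ζ + u, y - x⟫ + (ρh - ρ) / 2 * ‖y - x‖ ^ 2 ≤ g y + ρh / 2 * ‖y - x‖ ^ 2 := by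
  have hnormal : ⟪u, y - x⟫ ≤ 0 := hu y hy
  rw [inner_add_left]
  linarith

theorem Real.sqrt_two_mul_le_of_add_half_mul_sq_le {θ c t a : ℝ} (hθ : 0 < θ) (hc : 0 < c)
    (ht : 0 ≤ t) (h : θ + c / 2 * t ^ 2 ≤ a * t) : √(2 * θ * c) ≤ a := by
  set s := √(2 * θ * c)
  have hs : s ^ 2 = 2 * θ * c := Real.sq_sqrt (by positivity)
  have ht_pos : 0 < t := by
    rcases ht.lt_or_eq with ht | rfl
    · exact ht
    · nlinarith
  -- AM–GM: `c (2θ + c t² − 2 s t) = (s − c t)² ≥ 0`.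
  have hamgm : s * t ≤ θ + c / 2 * t ^ 2 := by
    nlinarith [sq_nonneg (s - c * t)]
  exact le_of_mul_le_mul_right (hamgm.trans h) ht_pos

theorem subgradient_norm_lower_bound_on_level_set_general
    {d : ℕ} (X : Set (EuclideanSpace ℝ (Fin d)))
    (g : EuclideanSpace ℝ (Fin d) → ℝ)
    (subg : EuclideanSpace ℝ (Fin d) → Set (EuclideanSpace ℝ (Fin d)))
    (ρ ρh θ : ℝ) (hρ : ρ < ρh) (hθ : 0 < θ)
    -- `g` is `ρ`-weakly convex on `X` (subgradient inequality)
    (hgwc : ∀ x' ∈ X, ∀ ζ ∈ subg x', ∀ z ∈ X,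
      g z ≥ g x' + (inner ℝ ζ (z - x') : ℝ) - ρ / 2 * ‖z - x'‖ ^ 2)
    -- uniform Slater condition on the level set
    (hslater : ∀ x ∈ X, g x = 0 → ∃ y ∈ X, g y + ρh / 2 * ‖y - x‖ ^ 2 ≤ -θ) :
    ∀ x ∈ X, g x = 0 → ∀ ζg ∈ subg x, ∀ u ∈ normalCone X x,
      ‖ζg + u‖ ≥ Real.sqrt (2 * θ * (ρh - ρ)) := by
  intro x hx hgx ζg hζg u hu
  obtain ⟨y, hy, hslater_y⟩ := hslater x hx hgx
  have hstrong := add_inner_add_half_mul_sq_le_of_mem_normalCone ρh hy (hgwc x hx ζg hζg y hy) hu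
  have hcs : -(‖ζg + u‖ * ‖y - x‖) ≤ ⟪ζg + u, y - x⟫ :=
    neg_le_of_abs_le (abs_real_inner_le_norm _ _)
  have hkey : θ + (ρh - ρ) / 2 * ‖y - x‖ ^ 2 ≤ ‖ζg + u‖ * ‖y - x‖ := by linarith
  exact Real.sqrt_two_mul_le_of_add_half_mul_sq_le hθ (sub_pos.2 hρ) (norm_nonneg _) hkey

/-- Lemma 2 of the paper: under the uniform Slater condition, the
subgradients of `g + δ_X` on the zero-level set `L = {x ∈ X : g x = 0}` are uniformly
bounded away from the origin by `ν = √(2θ(ρ̂ − ρ))`. -/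
theorem subgradient_norm_lower_bound_on_level_set
    {d : ℕ} (X : Set (EuclideanSpace ℝ (Fin d)))
    (hXc : IsClosed X) (hXconv : Convex ℝ X)
    (g : EuclideanSpace ℝ (Fin d) → ℝ)
    (subg : EuclideanSpace ℝ (Fin d) → Set (EuclideanSpace ℝ (Fin d)))
    (ρ ρh M θ : ℝ) (hρ : ρ < ρh) (hθ : 0 < θ)
    -- `g` is `ρ`-weakly convex on `X` (subgradient inequality)
    (hgwc : ∀ x' ∈ X, ∀ ζ ∈ subg x', ∀ z ∈ X,
      g z ≥ g x' + (inner ℝ ζ (z - x') : ℝ) - ρ / 2 * ‖z - x'‖ ^ 2)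
    -- subgradients of `g` are bounded in norm by `M` on `X`
    (hM : ∀ x ∈ X, ∀ ζ ∈ subg x, ‖ζ‖ ≤ M)
    -- uniform Slater condition on the level set
    (hslater : ∀ x ∈ X, g x = 0 → ∃ y ∈ X, g y + ρh / 2 * ‖y - x‖ ^ 2 ≤ -θ) :
    ∀ x ∈ X, g x = 0 → ∀ ζg ∈ subg x, ∀ u ∈ normalCone X x,
      ‖ζg + u‖ ≥ Real.sqrt (2 * θ * (ρh - ρ)) :=
  subgradient_norm_lower_bound_on_level_set_general X g subg ρ ρh θ hρ hθ hgwc hslater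
end
end

section
/- Projected subgradient with Polyak stepsize contracts distance to the sublevel set: let g₊ be ρ-weakly convex on closed convex X with subgradients bounded by M, let S = {x ∈ X : g₊(x) = 0} be nonempty, and suppose the error bound (ν/2)dist(x, S) ≤ g₊(x) holds for all x with dist(x, S) ≤ ν/ρ, where 0 < ν ≤ 2M. If dist(x, S) ≤ ν/(4ρ) and x⁺ = proj_X(x − η ζ) with ζ ∈ ∂g₊(x), ζ ≠ 0, and η = g₊(x)/‖ζ‖², then dist²(x⁺, S) ≤ (1 − ν²/(8M²))·dist²(x, S). -/
/-!
Let `u = x - (g₊(x)/‖ζ‖²) ζ`, so that `xp` is the projection of `u` onto `X`. For every `s ∈ S`,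
projecting onto the convex set `X ∋ s` does not increase the distance to `s`, and expanding
`‖u - s‖²` with the weak convexity inequality at `x` (where `g₊(s) = 0`) gives
`‖xp - s‖² ≤ (1 + ρ g₊(x)/‖ζ‖²) ‖x - s‖² - g₊(x)²/‖ζ‖²`. Taking the infimum over `s` replaces
`‖x - s‖` by `D = dist(x, S)`. Near `S` the error bound gives `g₊(x) ≥ νD/2`, while
`dist(x, S) ≤ ν/(4ρ)` gives `ρD² ≤ g₊(x)/2`; together with `‖ζ‖ ≤ M` this yields the factor
`1 - ν²/(8M²)`.
-/

open Metric

section InnerProductSpace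

variable {E : Type*} [NormedAddCommGroup E] [InnerProductSpace ℝ E]

theorem Convex.norm_sub_sq_le_of_isMinOn {K : Set E} (hK : Convex ℝ K) {u p s : E}
    (hp : p ∈ K) (hmin : IsMinOn (fun y => ‖y - u‖) K p) (hs : s ∈ K) :
    ‖p - s‖ ^ 2 ≤ ‖u - s‖ ^ 2 := by
  have : Nonempty K := ⟨⟨p, hp⟩⟩
  have hbdd : BddBelow (Set.range fun w : K => ‖u - w‖) :=
    ⟨0, by rintro _ ⟨w, rfl⟩; exact norm_nonneg _⟩
  have hinf : ‖u - p‖ = ⨅ w : K, ‖u - w‖ := by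
    refine le_antisymm (le_ciInf fun w => ?_) (ciInf_le hbdd ⟨p, hp⟩)
    simpa only [norm_sub_rev u] using isMinOn_iff.1 hmin w w.2
  have hvi : inner ℝ (u - p) (s - p) ≤ 0 :=
    (norm_eq_iInf_iff_real_inner_le_zero hK hp).1 hinf s hs
  have hsplit : u - s = (u - p) - (s - p) := by abel
  rw [hsplit, norm_sub_sq_real (u - p), norm_sub_rev p s]
  nlinarith [sq_nonneg ‖u - p‖]

theorem norm_polyak_step_sub_sq_le {x s ζ : E} {G ρ : ℝ} (hζ : ζ ≠ 0) (hG : 0 ≤ G)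
    (hwc : G + inner ℝ ζ (s - x) - ρ / 2 * ‖s - x‖ ^ 2 ≤ 0) :
    ‖x - (G / ‖ζ‖ ^ 2) • ζ - s‖ ^ 2 ≤ (1 + ρ * G / ‖ζ‖ ^ 2) * ‖s - x‖ ^ 2 - G ^ 2 / ‖ζ‖ ^ 2 := by
  set η := G / ‖ζ‖ ^ 2 with hη
  have hc : 0 < ‖ζ‖ ^ 2 := by positivity
  have hη0 : 0 ≤ η := by positivity
  have hηc : η * ‖ζ‖ ^ 2 = G := div_mul_cancel₀ G hc.ne'
  have hsplit : x - η • ζ - s = -((s - x) + η • ζ) := by abel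
  have hexpand : ‖x - η • ζ - s‖ ^ 2 = ‖s - x‖ ^ 2 + 2 * η * inner ℝ ζ (s - x) + η * G := by
    rw [hsplit, norm_neg, norm_add_sq_real, real_inner_smul_right, norm_smul, Real.norm_eq_abs,
      abs_of_nonneg hη0, real_inner_comm, ← hηc]
    ring
  have hρG : ρ * G / ‖ζ‖ ^ 2 = η * ρ := by rw [hη]; ring
  have hGG : G ^ 2 / ‖ζ‖ ^ 2 = η * G := by rw [hη]; ring
  rw [hexpand, hρG, hGG]
  nlinarith [mul_le_mul_of_nonneg_left hwc hη0]

end InnerProductSpace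

theorem le_mul_infDist_sq_sub {α : Type*} [PseudoMetricSpace α] {S : Set α} (hS : S.Nonempty)
    {x : α} {L A B : ℝ} (hA : 0 < A) (h : ∀ s ∈ S, L ≤ A * dist s x ^ 2 - B) :
    L ≤ A * infDist x S ^ 2 - B := by
  have hsqrt : √((L + B) / A) ≤ infDist x S := by
    refine (le_infDist hS).2 fun s hs => Real.sqrt_le_iff.2 ⟨dist_nonneg, ?_⟩
    rw [div_le_iff₀ hA, dist_comm]
    linarith [h s hs]
  have hle := (Real.sqrt_le_iff.1 hsqrt).2
  rw [div_le_iff₀ hA] at hle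
  linarith

theorem nonneg_and_mul_le_of_le_div_four_mul {ρ ν D : ℝ} (hν : 0 < ν) (hD : 0 ≤ D)
    (h : D ≤ ν / (4 * ρ)) : 0 ≤ ρ ∧ D ≤ ν / ρ ∧ ρ * D ≤ ν / 4 := by
  rcases lt_trichotomy ρ 0 with hρ | rfl | hρ
  · have : ν / (4 * ρ) < 0 := div_neg_of_pos_of_neg hν (by linarith)
    linarith
  · simp only [mul_zero, div_zero] at h ⊢
    exact ⟨le_rfl, h, by linarith⟩
  · refine ⟨hρ.le, h.trans (div_le_div_of_nonneg_left hν.le hρ (by linarith)), ?_⟩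
    rw [le_div_iff₀ (by positivity)] at h
    linarith

theorem polyak_contraction_factor_le {ρ M ν D G c : ℝ} (hc : 0 < c) (hcM : c ≤ M ^ 2)
    (hνD : 0 ≤ ν * D) (hG : ν / 2 * D ≤ G) (hρD : ρ * D ^ 2 ≤ G / 2) :
    (1 + ρ * G / c) * D ^ 2 - G ^ 2 / c ≤ (1 - ν ^ 2 / (8 * M ^ 2)) * D ^ 2 := by
  have hG0 : 0 ≤ G := by linarith
  have hM : 0 < M ^ 2 := hc.trans_le hcM
  calc (1 + ρ * G / c) * D ^ 2 - G ^ 2 / c = D ^ 2 - G / c * (G - ρ * D ^ 2) := by ring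
    _ ≤ D ^ 2 - G / c * (G / 2) := by gcongr; linarith
    _ = D ^ 2 - G ^ 2 / (2 * c) := by ring
    _ ≤ D ^ 2 - G ^ 2 / (2 * M ^ 2) := by gcongr
    _ ≤ D ^ 2 - (ν / 2 * D) ^ 2 / (2 * M ^ 2) := by gcongr; linarith
    _ = (1 - ν ^ 2 / (8 * M ^ 2)) * D ^ 2 := by field_simp; ring

theorem polyak_step_contracts_distance_general
    {d : ℕ} (X : Set (EuclideanSpace ℝ (Fin d)))
    (hXconv : Convex ℝ X)
    (gp : EuclideanSpace ℝ (Fin d) → ℝ)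
    (subgp : EuclideanSpace ℝ (Fin d) → Set (EuclideanSpace ℝ (Fin d)))
    (ρ M ν : ℝ) (hν : 0 < ν)
    -- `g₊` is `ρ`-weakly convex on `X` (subgradient inequality)
    (hwc : ∀ x' ∈ X, ∀ ζ ∈ subgp x', ∀ z ∈ X,
      gp z ≥ gp x' + (inner ℝ ζ (z - x') : ℝ) - ρ / 2 * ‖z - x'‖ ^ 2)
    -- subgradients bounded by `M`
    (hM : ∀ x ∈ X, ∀ ζ ∈ subgp x, ‖ζ‖ ≤ M)
    (S : Set (EuclideanSpace ℝ (Fin d))) (hSdef : S = {x ∈ X | gp x = 0})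
    (hSne : S.Nonempty)
    -- error bound `(ν/2)·dist(x, S) ≤ g₊(x)` whenever `dist(x, S) ≤ ν/ρ`
    (heb : ∀ x ∈ X, Metric.infDist x S ≤ ν / ρ →
      ν / 2 * Metric.infDist x S ≤ gp x)
    (x : EuclideanSpace ℝ (Fin d)) (hx : x ∈ X)
    (hdist : Metric.infDist x S ≤ ν / (4 * ρ))
    (ζ : EuclideanSpace ℝ (Fin d)) (hζ : ζ ∈ subgp x) (hζ0 : ζ ≠ 0)
    -- `xp = proj_X (x − η ζ)` with Polyak stepsize `η = g₊(x)/‖ζ‖²`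
    (xp : EuclideanSpace ℝ (Fin d)) (hxpX : xp ∈ X)
    (hproj : ∀ y ∈ X, ‖xp - (x - (gp x / ‖ζ‖ ^ 2) • ζ)‖ ≤ ‖y - (x - (gp x / ‖ζ‖ ^ 2) • ζ)‖) :
    Metric.infDist xp S ^ 2 ≤ (1 - ν ^ 2 / (8 * M ^ 2)) * Metric.infDist x S ^ 2 := by
  set D := infDist x S
  have hD0 : 0 ≤ D := infDist_nonneg
  obtain ⟨hρ0, hDνρ, hρD⟩ := nonneg_and_mul_le_of_le_div_four_mul hν hD0 hdist
  have hG : ν / 2 * D ≤ gp x := heb x hx hDνρ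
  have hG0 : 0 ≤ gp x := le_trans (by positivity) hG
  have hc : 0 < ‖ζ‖ ^ 2 := by positivity
  have hstep : ∀ s ∈ S, infDist xp S ^ 2 ≤
      (1 + ρ * gp x / ‖ζ‖ ^ 2) * dist s x ^ 2 - gp x ^ 2 / ‖ζ‖ ^ 2 := by
    intro s hs
    have hsX : s ∈ X ∧ gp s = 0 := by rwa [hSdef] at hs
    have hwcs := hwc x hx ζ hζ s hsX.1
    calc infDist xp S ^ 2 ≤ ‖xp - s‖ ^ 2 := by
          rw [← dist_eq_norm]
          gcongr
          exacts [infDist_nonneg, infDist_le_dist_of_mem hs]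
      _ ≤ ‖x - (gp x / ‖ζ‖ ^ 2) • ζ - s‖ ^ 2 :=
          hXconv.norm_sub_sq_le_of_isMinOn hxpX (isMinOn_iff.2 hproj) hsX.1
      _ ≤ _ := by
          rw [dist_eq_norm]
          exact norm_polyak_step_sub_sq_le hζ0 hG0 (by linarith)
  have hA : 0 < 1 + ρ * gp x / ‖ζ‖ ^ 2 := by
    have := div_nonneg (mul_nonneg hρ0 hG0) hc.le
    linarith
  refine (le_mul_infDist_sq_sub hSne hA hstep).trans ?_
  refine polyak_contraction_factor_le hc ?_ (by positivity) hG ?_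
  · gcongr
    exact hM x hx ζ hζ
  · nlinarith [mul_le_mul_of_nonneg_right hρD hD0]

/-- one step of projected subgradient descent on `g₊` with Polyak
stepsize contracts the squared distance to the zero set `S` by a factor
`1 − ν²/(8M²)`, provided `dist(x, S) ≤ ν/(4ρ)`. -/
theorem polyak_step_contracts_distance
    {d : ℕ} (X : Set (EuclideanSpace ℝ (Fin d)))
    (hXc : IsClosed X) (hXconv : Convex ℝ X) (hXne : X.Nonempty)
    (gp : EuclideanSpace ℝ (Fin d) → ℝ)
    (subgp : EuclideanSpace ℝ (Fin d) → Set (EuclideanSpace ℝ (Fin d)))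
    (ρ M ν : ℝ) (hν : 0 < ν) (hνM : ν ≤ 2 * M)
    -- `g₊` is `ρ`-weakly convex on `X` (subgradient inequality)
    (hwc : ∀ x' ∈ X, ∀ ζ ∈ subgp x', ∀ z ∈ X,
      gp z ≥ gp x' + (inner ℝ ζ (z - x') : ℝ) - ρ / 2 * ‖z - x'‖ ^ 2)
    -- subgradients bounded by `M`
    (hM : ∀ x ∈ X, ∀ ζ ∈ subgp x, ‖ζ‖ ≤ M)
    (S : Set (EuclideanSpace ℝ (Fin d))) (hSdef : S = {x ∈ X | gp x = 0})
    (hSne : S.Nonempty)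
    -- error bound `(ν/2)·dist(x, S) ≤ g₊(x)` whenever `dist(x, S) ≤ ν/ρ`
    (heb : ∀ x ∈ X, Metric.infDist x S ≤ ν / ρ →
      ν / 2 * Metric.infDist x S ≤ gp x)
    (x : EuclideanSpace ℝ (Fin d)) (hx : x ∈ X)
    (hdist : Metric.infDist x S ≤ ν / (4 * ρ))
    (ζ : EuclideanSpace ℝ (Fin d)) (hζ : ζ ∈ subgp x) (hζ0 : ζ ≠ 0)
    -- `xp = proj_X (x − η ζ)` with Polyak stepsize `η = g₊(x)/‖ζ‖²`
    (xp : EuclideanSpace ℝ (Fin d)) (hxpX : xp ∈ X)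
    (hproj : ∀ y ∈ X, ‖xp - (x - (gp x / ‖ζ‖ ^ 2) • ζ)‖ ≤ ‖y - (x - (gp x / ‖ζ‖ ^ 2) • ζ)‖) :
    Metric.infDist xp S ^ 2 ≤ (1 - ν ^ 2 / (8 * M ^ 2)) * Metric.infDist x S ^ 2 :=
  polyak_step_contracts_distance_general X hXconv gp subgp ρ M ν hν hwc hM S hSdef hSne heb x hx
    hdist ζ hζ hζ0 xp hxpX hproj
end

section
/- Iterating the Polyak-stepsize contraction preserves proximity: under the setting of the previous contraction lemma, if a sequence x^(0), x^(1), … in X is generated by x^(t+1) = proj_X(x^(t) − η_t ζ^(t)) with ζ^(t) ∈ ∂g₊(x^(t)), η_t = g₊(x^(t))/‖ζ^(t)‖² when ζ^(t) ≠ 0 and η_t = 0 otherwise, and dist(x^(0), S) ≤ ν/(4ρ), then dist(x^(t), S) ≤ dist(x^(0), S) for all t ≥ 0, and dist²(x^(t+1), S) ≤ (1 − ν²/(8M²))·dist²(x^(t), S) for all t ≥ 0. -/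
/-!
For `z ∈ S`, weak convexity at the iterate `x` gives `⟪ζ, x - z⟫ ≥ g₊(x) - (ρ/2)‖x - z‖²`, and
projecting onto the convex set `X` does not increase the distance to `z ∈ X`. With the Polyak
step `η‖ζ‖² = g₊(x)` this yields `‖x⁺ - z‖² ≤ (1 + ρη)‖x - z‖² - η g₊(x)`; passing to the
infimum over `z` and using `ρ dist(x, S) ≤ ν/4` together with the error bound, the right side is
at most `(1 - ν²/(8M²)) dist²(x, S)`. A zero subgradient gives `g₊(x) ≤ (ρ/2) dist²(x, S)`,
which the error bound only allows when `dist(x, S) = 0`. Distances to `S` therefore never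
increase, so the hypotheses of a single step propagate by induction.
-/

open Metric Set Filter
open scoped InnerProductSpace

-- `S = {g₊ = 0} ∩ X` need not be closed, so `infDist` is approached only through points of `S`.
theorem Metric.le_comp_infDist_of_forall_le {α : Type*} [PseudoMetricSpace α] {s : Set α}
    (hs : s.Nonempty) {x : α} {a : ℝ} {F : ℝ → ℝ} (hF : Continuous F)
    (hFm : MonotoneOn F (Ici 0)) (h : ∀ z ∈ s, a ≤ F (dist x z)) : a ≤ F (infDist x s) := by
  refine ge_of_tendsto (hF.continuousWithinAt (s := Ioi (infDist x s)))
    (eventually_nhdsWithin_of_forall fun r hr => ?_)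
  obtain ⟨z, hz, hzr⟩ := (infDist_lt_iff hs).1 hr
  exact (h z hz).trans (hFm dist_nonneg (dist_nonneg.trans hzr.le) hzr.le)

theorem radius_bounds_of_le_div_four_mul {ρ ν D : ℝ} (hν : 0 < ν) (hD : 0 ≤ D)
    (h : D ≤ ν / (4 * ρ)) : 0 ≤ ρ ∧ ρ * D ≤ ν / 4 ∧ D ≤ ν / ρ := by
  have hρ : 0 ≤ ρ := le_of_not_gt fun hρ =>
    (div_neg_of_pos_of_neg hν (by linarith)).not_ge (hD.trans h)
  refine ⟨hρ, ?_⟩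
  rcases hρ.eq_or_lt with rfl | hρ
  · simp only [zero_mul, mul_zero, div_zero] at h ⊢
    exact ⟨by positivity, h⟩
  · refine ⟨?_, h.trans (div_le_div_of_nonneg_left hν.le hρ (by linarith))⟩
    linarith [(le_div_iff₀ (by positivity)).1 h]

theorem polyak_bound_le_contraction {D g N M ρ ν η : ℝ} (hν : 0 ≤ ν) (hD : 0 ≤ D) (hN : 0 < N)
    (hNM : N ≤ M) (hρD : ρ * D ≤ ν / 4) (hg : ν / 2 * D ≤ g) (hη : η = g / N ^ 2) :
    (1 + ρ * η) * D ^ 2 - η * g ≤ (1 - ν ^ 2 / (8 * M ^ 2)) * D ^ 2 := by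
  have hνD : 0 ≤ ν / 2 * D := by positivity
  have hη0 : 0 ≤ η := by rw [hη]; exact div_nonneg (hνD.trans hg) (sq_nonneg N)
  have hρD2 : ρ * D ^ 2 ≤ g / 2 := by nlinarith [mul_le_mul_of_nonneg_right hρD hD]
  calc (1 + ρ * η) * D ^ 2 - η * g = D ^ 2 + η * (ρ * D ^ 2 - g) := by ring
    _ ≤ D ^ 2 + η * (-(g / 2)) := by gcongr; linarith
    _ = D ^ 2 - g ^ 2 / (2 * N ^ 2) := by rw [hη]; ring
    _ ≤ D ^ 2 - (ν / 2 * D) ^ 2 / (2 * M ^ 2) := by gcongr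
    _ = (1 - ν ^ 2 / (8 * M ^ 2)) * D ^ 2 := by ring

section

variable {E : Type*} [NormedAddCommGroup E] [InnerProductSpace ℝ E]

theorem Convex.norm_sub_le_of_isMinOn_norm_sub {K : Set E} (hK : Convex ℝ K) {p q w : E}
    (hq : q ∈ K) (hmin : IsMinOn (fun y => ‖y - p‖) K q) (hw : w ∈ K) :
    ‖q - w‖ ≤ ‖p - w‖ := by
  have hinf : ‖p - q‖ = ⨅ y : K, ‖p - y‖ := by
    have : Nonempty K := ⟨⟨q, hq⟩⟩
    refine le_antisymm (le_ciInf fun y => ?_) (ciInf_le ?_ (⟨q, hq⟩ : K))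
    · simpa only [norm_sub_rev p] using isMinOn_iff.1 hmin y y.2
    · exact ⟨0, by rintro _ ⟨y, rfl⟩; positivity⟩
  have hvar : ⟪p - q, w - q⟫_ℝ ≤ 0 := (norm_eq_iInf_iff_real_inner_le_zero hK hq).1 hinf w hw
  have hexp : ‖p - w‖ ^ 2 = ‖p - q‖ ^ 2 - 2 * ⟪p - q, w - q⟫_ℝ + ‖q - w‖ ^ 2 := by
    rw [show p - w = (p - q) - (w - q) by abel, norm_sub_sq_real, norm_sub_rev q w]
  exact pow_le_pow_iff_left₀ (norm_nonneg _) (norm_nonneg _) two_ne_zero |>.1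
    (by nlinarith [sq_nonneg ‖p - q‖])

theorem norm_sub_smul_sub_sq_le {x z ζ : E} {g ρ η : ℝ} (hη : 0 ≤ η) (hηζ : η * ‖ζ‖ ^ 2 = g)
    (hinner : g - ρ / 2 * ‖x - z‖ ^ 2 ≤ ⟪ζ, x - z⟫_ℝ) :
    ‖x - η • ζ - z‖ ^ 2 ≤ (1 + ρ * η) * ‖x - z‖ ^ 2 - η * g := by
  have hexp : ‖x - η • ζ - z‖ ^ 2 = ‖x - z‖ ^ 2 - 2 * η * ⟪ζ, x - z⟫_ℝ + η * (η * ‖ζ‖ ^ 2) := by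
    rw [sub_right_comm, norm_sub_sq_real, real_inner_smul_right, real_inner_comm, norm_smul,
      Real.norm_eq_abs, mul_pow, sq_abs]
    ring
  rw [hexp, hηζ]
  nlinarith [mul_le_mul_of_nonneg_left hinner hη]

theorem infDist_polyakStep_sq_le {X S : Set E} {g : E → ℝ} {x x' ζ : E} {η ρ M ν : ℝ}
    (hX : Convex ℝ X) (hSX : S ⊆ X) (hS0 : ∀ z ∈ S, g z = 0) (hS : S.Nonempty) (hx : x ∈ X)
    (hwc : ∀ z ∈ X, g x + ⟪ζ, z - x⟫_ℝ - ρ / 2 * ‖z - x‖ ^ 2 ≤ g z) (hζM : ‖ζ‖ ≤ M)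
    (hν : 0 < ν) (hρ : 0 ≤ ρ) (hρD : ρ * infDist x S ≤ ν / 4)
    (heb : ν / 2 * infDist x S ≤ g x)
    (hη : (ζ ≠ 0 → η = g x / ‖ζ‖ ^ 2) ∧ (ζ = 0 → η = 0))
    (hx' : x' ∈ X) (hmin : IsMinOn (fun y => ‖y - (x - η • ζ)‖) X x') :
    infDist x' S ^ 2 ≤ (1 - ν ^ 2 / (8 * M ^ 2)) * infDist x S ^ 2 := by
  set D := infDist x S
  have hD : 0 ≤ D := infDist_nonneg
  have hsharp : ∀ z ∈ S, g x - ρ / 2 * ‖x - z‖ ^ 2 ≤ ⟪ζ, x - z⟫_ℝ := by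
    intro z hz
    have := hwc z (hSX hz)
    rw [hS0 z hz, ← neg_sub x z, inner_neg_right, norm_neg] at this
    linarith
  by_cases hζ : ζ = 0
  · have hgD : g x ≤ ρ / 2 * D ^ 2 :=
      le_comp_infDist_of_forall_le (F := fun r => ρ / 2 * r ^ 2) hS (by fun_prop)
        (fun r hr _ _ hrs => by dsimp only; have := mem_Ici.1 hr; gcongr)
        fun z hz => by simpa [hζ, dist_eq_norm] using hsharp z hz
    have hD0 : D = 0 := by nlinarith [mul_le_mul_of_nonneg_right hρD hD]
    have hx'x : x' = x := by
      simpa [hη.2 hζ, hζ, sub_eq_zero] using isMinOn_iff.1 hmin x hx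
    rw [hx'x]
    change D ^ 2 ≤ _ * D ^ 2
    simp [hD0]
  · have hηx : η = g x / ‖ζ‖ ^ 2 := hη.1 hζ
    have hN : 0 < ‖ζ‖ := norm_pos_iff.2 hζ
    have hη0 : 0 ≤ η := hηx ▸ div_nonneg ((by positivity : 0 ≤ ν / 2 * D).trans heb) (sq_nonneg _)
    have hηζ : η * ‖ζ‖ ^ 2 = g x := by rw [hηx]; field_simp
    have hρη : 0 ≤ 1 + ρ * η := by positivity
    have hD' : infDist x' S ^ 2 ≤ (1 + ρ * η) * D ^ 2 - η * g x :=
      le_comp_infDist_of_forall_le (F := fun r => (1 + ρ * η) * r ^ 2 - η * g x) hS (by fun_prop)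
        (fun r hr _ _ hrs => by dsimp only; have := mem_Ici.1 hr; gcongr) fun z hz =>
      calc infDist x' S ^ 2 ≤ ‖x' - z‖ ^ 2 := by
            rw [← dist_eq_norm]; gcongr; exacts [infDist_nonneg, infDist_le_dist_of_mem hz]
        _ ≤ ‖x - η • ζ - z‖ ^ 2 := by
            gcongr; exact hX.norm_sub_le_of_isMinOn_norm_sub hx' hmin (hSX hz)
        _ ≤ (1 + ρ * η) * dist x z ^ 2 - η * g x := by
            rw [dist_eq_norm]; exact norm_sub_smul_sub_sq_le hη0 hηζ (hsharp z hz)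
    exact hD'.trans (polyak_bound_le_contraction hν.le hD hN hζM hρD heb hηx)

end

theorem polyak_iterates_stay_close_and_contract_general
    {d : ℕ} (X : Set (EuclideanSpace ℝ (Fin d)))
    (hXconv : Convex ℝ X)
    (gp : EuclideanSpace ℝ (Fin d) → ℝ)
    (subgp : EuclideanSpace ℝ (Fin d) → Set (EuclideanSpace ℝ (Fin d)))
    (ρ M ν : ℝ) (hν : 0 < ν)
    -- `g₊` is `ρ`-weakly convex on `X` (subgradient inequality)
    (hwc : ∀ x' ∈ X, ∀ ζ ∈ subgp x', ∀ z ∈ X,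
      gp z ≥ gp x' + (inner ℝ ζ (z - x') : ℝ) - ρ / 2 * ‖z - x'‖ ^ 2)
    -- subgradients bounded by `M`
    (hM : ∀ x ∈ X, ∀ ζ ∈ subgp x, ‖ζ‖ ≤ M)
    (S : Set (EuclideanSpace ℝ (Fin d))) (hSdef : S = {x ∈ X | gp x = 0})
    (hSne : S.Nonempty)
    -- error bound `(ν/2)·dist(x, S) ≤ g₊(x)` whenever `dist(x, S) ≤ ν/ρ`
    (heb : ∀ x ∈ X, Metric.infDist x S ≤ ν / ρ →
      ν / 2 * Metric.infDist x S ≤ gp x)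
    -- the sequence of iterates, subgradients and Polyak stepsizes
    (x : ℕ → EuclideanSpace ℝ (Fin d)) (ζ : ℕ → EuclideanSpace ℝ (Fin d)) (η : ℕ → ℝ)
    (hx0 : x 0 ∈ X)
    (hdist0 : Metric.infDist (x 0) S ≤ ν / (4 * ρ))
    (hζ : ∀ t, ζ t ∈ subgp (x t))
    (hη : ∀ t, (ζ t ≠ 0 → η t = gp (x t) / ‖ζ t‖ ^ 2) ∧ (ζ t = 0 → η t = 0))
    -- `x (t+1) = proj_X (x t − η t • ζ t)`
    (hstep : ∀ t, x (t + 1) ∈ X ∧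
      ∀ y ∈ X, ‖x (t + 1) - (x t - η t • ζ t)‖ ≤ ‖y - (x t - η t • ζ t)‖) :
    (∀ t, Metric.infDist (x t) S ≤ Metric.infDist (x 0) S) ∧
    (∀ t, Metric.infDist (x (t + 1)) S ^ 2 ≤
      (1 - ν ^ 2 / (8 * M ^ 2)) * Metric.infDist (x t) S ^ 2) := by
  have hSX : S ⊆ X := hSdef ▸ sep_subset X _
  have hS0 : ∀ z ∈ S, gp z = 0 := fun z hz => (hSdef ▸ hz).2
  obtain ⟨hρ, hρD0, hD0ν⟩ := radius_bounds_of_le_div_four_mul hν infDist_nonneg hdist0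
  have contract : ∀ t, x t ∈ X → infDist (x t) S ≤ infDist (x 0) S →
      infDist (x (t + 1)) S ^ 2 ≤ (1 - ν ^ 2 / (8 * M ^ 2)) * infDist (x t) S ^ 2 :=
    fun t hxt hDt => infDist_polyakStep_sq_le hXconv hSX hS0 hSne hxt (hwc _ hxt _ (hζ t))
      (hM _ hxt _ (hζ t)) hν hρ ((mul_le_mul_of_nonneg_left hDt hρ).trans hρD0)
      (heb _ hxt (hDt.trans hD0ν)) (hη t) (hstep t).1 (isMinOn_iff.2 (hstep t).2)
  have stay : ∀ t, x t ∈ X ∧ infDist (x t) S ≤ infDist (x 0) S := by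
    intro t
    induction t with
    | zero => exact ⟨hx0, le_rfl⟩
    | succ t ih =>
      refine ⟨(hstep t).1, le_trans ?_ ih.2⟩
      refine (pow_le_pow_iff_left₀ infDist_nonneg infDist_nonneg two_ne_zero).1 ?_
      exact (contract t ih.1 ih.2).trans
        (mul_le_of_le_one_left (sq_nonneg _) (sub_le_self _ (by positivity)))
  exact ⟨fun t => (stay t).2, fun t => contract t (stay t).1 (stay t).2⟩

/-- Lemma A.4 / Theorem 4.1 of Davis et al.: iterating the projected
subgradient method on `g₊` with Polyak stepsizes, starting with `dist(x⁰, S) ≤ ν/(4ρ)`,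
keeps the iterates at distance at most `dist(x⁰, S)` from `S`, and each step contracts
the squared distance by the factor `1 − ν²/(8M²)`. -/
theorem polyak_iterates_stay_close_and_contract
    {d : ℕ} (X : Set (EuclideanSpace ℝ (Fin d)))
    (hXc : IsClosed X) (hXconv : Convex ℝ X) (hXne : X.Nonempty)
    (gp : EuclideanSpace ℝ (Fin d) → ℝ)
    (subgp : EuclideanSpace ℝ (Fin d) → Set (EuclideanSpace ℝ (Fin d)))
    (ρ M ν : ℝ) (hν : 0 < ν) (hνM : ν ≤ 2 * M)
    -- `g₊` is `ρ`-weakly convex on `X` (subgradient inequality)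
    (hwc : ∀ x' ∈ X, ∀ ζ ∈ subgp x', ∀ z ∈ X,
      gp z ≥ gp x' + (inner ℝ ζ (z - x') : ℝ) - ρ / 2 * ‖z - x'‖ ^ 2)
    -- subgradients bounded by `M`
    (hM : ∀ x ∈ X, ∀ ζ ∈ subgp x, ‖ζ‖ ≤ M)
    (S : Set (EuclideanSpace ℝ (Fin d))) (hSdef : S = {x ∈ X | gp x = 0})
    (hSne : S.Nonempty)
    -- error bound `(ν/2)·dist(x, S) ≤ g₊(x)` whenever `dist(x, S) ≤ ν/ρ`
    (heb : ∀ x ∈ X, Metric.infDist x S ≤ ν / ρ →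
      ν / 2 * Metric.infDist x S ≤ gp x)
    -- the sequence of iterates, subgradients and Polyak stepsizes
    (x : ℕ → EuclideanSpace ℝ (Fin d)) (ζ : ℕ → EuclideanSpace ℝ (Fin d)) (η : ℕ → ℝ)
    (hx0 : x 0 ∈ X)
    (hdist0 : Metric.infDist (x 0) S ≤ ν / (4 * ρ))
    (hζ : ∀ t, ζ t ∈ subgp (x t))
    (hη : ∀ t, (ζ t ≠ 0 → η t = gp (x t) / ‖ζ t‖ ^ 2) ∧ (ζ t = 0 → η t = 0))
    -- `x (t+1) = proj_X (x t − η t • ζ t)`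
    (hstep : ∀ t, x (t + 1) ∈ X ∧
      ∀ y ∈ X, ‖x (t + 1) - (x t - η t • ζ t)‖ ≤ ‖y - (x t - η t • ζ t)‖) :
    (∀ t, Metric.infDist (x t) S ≤ Metric.infDist (x 0) S) ∧
    (∀ t, Metric.infDist (x (t + 1)) S ^ 2 ≤
      (1 - ν ^ 2 / (8 * M ^ 2)) * Metric.infDist (x t) S ^ 2) :=
  polyak_iterates_stay_close_and_contract_general X hXconv gp subgp ρ M ν hν hwc hM S hSdef hSne heb
    x ζ η hx0 hdist0 hζ hη hstep
end

section
/- Multiplier bound under the uniform Slater condition: let f, g be ρ-weakly convex on closed convex X with subgradients bounded by M, and suppose ρ̂ > ρ, θ > 0, and y ∈ X satisfy g(y) + (ρ̂/2)‖y − x‖² ≤ −θ for a given x ∈ X. Let x̂ minimize f(z) + (ρ̂/2)‖z − x‖² over {z ∈ X : g(z) + (ρ̂/2)‖z − x‖² ≤ 0}, with KKT multiplier λ̂ ≥ 0: ζ_f + ρ̂(x̂ − x) + λ̂(ζ_g + ρ̂(x̂ − x)) + u = 0 for some ζ_f ∈ ∂f(x̂), ζ_g ∈ ∂g(x̂), u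 ∈ N_X(x̂), with complementary slackness λ̂(g(x̂) + (ρ̂/2)‖x̂ − x‖²) = 0. Then ‖x̂ − x‖ ≤ M/ρ̂ and λ̂ ≤ 2M/√(2θ(ρ̂ − ρ)). -/
/-!
On `X` the shifted constraint `h z = g z + (ρ̂/2)‖z − x‖²` is `(ρ̂ − ρ)`-strongly
convex, and at an active constraint `w = ζ_g + ρ̂(x̂ − x) + u/λ̂` is one of its subgradients on `X`.
Strong convexity at the Slater point `y` gives `θ + ((ρ̂ − ρ)/2)‖y − x̂‖² ≤ ‖w‖ ‖y − x̂‖`, whence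
`‖w‖ ≥ √(2θ(ρ̂ − ρ))` by AM–GM; on the other hand the KKT equation reads
`λ̂ w = −(ζ_f + ρ̂(x̂ − x))`, of norm at most `2M` once `ρ̂‖x̂ − x‖ ≤ M` is known.
-/

noncomputable section

open scoped RealInnerProductSpace

variable {E : Type*} [NormedAddCommGroup E] [InnerProductSpace ℝ E]

/-- `ζ` is a subgradient of `φ` on `X` at `x` with curvature modulus `μ`: `μ < 0` is weak
convexity, `μ > 0` strong convexity. -/
def IsSubgradientOn (μ : ℝ) (φ : E → ℝ) (X : Set E) (x ζ : E) : Prop :=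
  ∀ z ∈ X, φ x + ⟪ζ, z - x⟫ + μ / 2 * ‖z - x‖ ^ 2 ≤ φ z

namespace IsSubgradientOn

variable {μ : ℝ} {φ : E → ℝ} {X : Set E} {x' ζ : E}

theorem add_half_mul_sq_norm_sub (h : IsSubgradientOn μ φ X x' ζ) (c : ℝ) (x : E) :
    IsSubgradientOn (μ + c) (fun z ↦ φ z + c / 2 * ‖z - x‖ ^ 2) X x' (ζ + c • (x' - x)) := by
  intro z hz
  have hsplit : ‖z - x‖ ^ 2 = ‖x' - x‖ ^ 2 + 2 * ⟪x' - x, z - x'⟫ + ‖z - x'‖ ^ 2 := by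
    rw [← norm_add_sq_real, sub_add_sub_cancel']
  have := h z hz
  simp only [inner_add_left, real_inner_smul_left]
  linear_combination this - c / 2 * hsplit

theorem add_smul_of_normal (h : IsSubgradientOn μ φ X x' ζ) {u : E}
    (hu : ∀ z ∈ X, ⟪u, z - x'⟫ ≤ 0) {c : ℝ} (hc : 0 ≤ c) :
    IsSubgradientOn μ φ X x' (ζ + c • u) := by
  intro z hz
  have := mul_nonpos_of_nonneg_of_nonpos hc (hu z hz)
  have := h z hz
  rw [inner_add_left, real_inner_smul_left]
  linarith

end IsSubgradientOn

theorem sqrt_four_mul_le_of_add_mul_sq_le {a b c t : ℝ} (ha : 0 < a) (hb : 0 ≤ b) (ht : 0 ≤ t)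
    (h : a + b * t ^ 2 ≤ c * t) : √(4 * a * b) ≤ c := by
  have htpos : 0 < t := ht.lt_of_ne fun h0 ↦ by subst h0; linarith
  have hc : 0 < c := pos_of_mul_pos_left (by nlinarith) ht
  have hamgm : 4 * a * b * t ^ 2 ≤ (a + b * t ^ 2) ^ 2 := by nlinarith [sq_nonneg (a - b * t ^ 2)]
  have hsq : (a + b * t ^ 2) ^ 2 ≤ (c * t) ^ 2 := pow_le_pow_left₀ (by positivity) h 2
  rw [Real.sqrt_le_iff]
  exact ⟨hc.le, le_of_mul_le_mul_right (by nlinarith) (pow_pos htpos 2)⟩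

theorem IsSubgradientOn.sqrt_le_norm {μ θ : ℝ} {φ : E → ℝ} {X : Set E} {x' ζ y : E}
    (h : IsSubgradientOn μ φ X x' ζ) (hμ : 0 ≤ μ) (hθ : 0 < θ) (hy : y ∈ X)
    (hgap : φ y + θ ≤ φ x') : √(2 * θ * μ) ≤ ‖ζ‖ := by
  have hcs : -⟪ζ, y - x'⟫ ≤ ‖ζ‖ * ‖y - x'‖ := (neg_le_abs _).trans (abs_real_inner_le_norm _ _)
  have hsub := h y hy
  have hamgm : √(4 * θ * (μ / 2)) ≤ ‖ζ‖ :=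
    sqrt_four_mul_le_of_add_mul_sq_le hθ (by positivity) (norm_nonneg (y - x')) (by linarith)
  rwa [show 4 * θ * (μ / 2) = 2 * θ * μ by ring] at hamgm

theorem norm_le_div_of_kkt {ζf ζg u v : E} {ρh lam M : ℝ} (hρh : 0 < ρh) (hlam : 0 ≤ lam)
    (hζf : ‖ζf‖ ≤ M) (hζg : ‖ζg‖ ≤ M) (hu : 0 ≤ ⟪u, v⟫)
    (hKKT : ζf + ρh • v + lam • (ζg + ρh • v) + u = 0) : ‖v‖ ≤ M / ρh := by
  have hpair : ⟪ζf, v⟫ + ρh * ‖v‖ ^ 2 + lam * (⟪ζg, v⟫ + ρh * ‖v‖ ^ 2) + ⟪u, v⟫ = 0 := by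
    have := congrArg (⟪·, v⟫) hKKT
    simpa only [inner_add_left, real_inner_smul_left, real_inner_self_eq_norm_sq, inner_zero_left]
      using this
  have hf : -⟪ζf, v⟫ ≤ M * ‖v‖ :=
    (neg_le_abs _).trans ((abs_real_inner_le_norm _ _).trans (by gcongr))
  have hg : -⟪ζg, v⟫ ≤ M * ‖v‖ :=
    (neg_le_abs _).trans ((abs_real_inner_le_norm _ _).trans (by gcongr))
  have hbound : (1 + lam) * (ρh * ‖v‖ ^ 2) ≤ (1 + lam) * (M * ‖v‖) := by
    nlinarith [mul_le_mul_of_nonneg_left hg hlam]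
  have hsq : ρh * ‖v‖ ^ 2 ≤ M * ‖v‖ := le_of_mul_le_mul_left hbound (by linarith)
  rw [le_div_iff₀ hρh]
  rcases (norm_nonneg v).eq_or_lt with h0 | hpos
  · rw [← h0, zero_mul]
    exact (norm_nonneg _).trans hζf
  · nlinarith

theorem multiplier_bound_weakly_convex_constraint_general
    {d : ℕ} (X : Set (EuclideanSpace ℝ (Fin d)))
    (g : EuclideanSpace ℝ (Fin d) → ℝ)
    (subf subg : EuclideanSpace ℝ (Fin d) → Set (EuclideanSpace ℝ (Fin d)))
    (ρ ρh M θ : ℝ) (hρ0 : 0 ≤ ρ) (hρ : ρ < ρh) (hθ : 0 < θ)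
    -- `f` and `g` are `ρ`-weakly convex on `X` (subgradient inequalities)
    (hgwc : ∀ x' ∈ X, ∀ ζ ∈ subg x', ∀ z ∈ X,
      g z ≥ g x' + (inner ℝ ζ (z - x') : ℝ) - ρ / 2 * ‖z - x'‖ ^ 2)
    -- subgradients bounded by `M`
    (hMf : ∀ x ∈ X, ∀ ζ ∈ subf x, ‖ζ‖ ≤ M)
    (hMg : ∀ x ∈ X, ∀ ζ ∈ subg x, ‖ζ‖ ≤ M)
    (x : EuclideanSpace ℝ (Fin d)) (hx : x ∈ X)
    -- uniform Slater point
    (y : EuclideanSpace ℝ (Fin d)) (hy : y ∈ X)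
    (hslater : g y + ρh / 2 * ‖y - x‖ ^ 2 ≤ -θ)
    -- `xhat` minimizes `f(z) + (ρ̂/2)‖z − x‖²` over `{z ∈ X : g(z) + (ρ̂/2)‖z − x‖² ≤ 0}`
    (xhat : EuclideanSpace ℝ (Fin d)) (hxhatX : xhat ∈ X)
    -- KKT conditions with multiplier `lam`
    (lam : ℝ) (hlam : 0 ≤ lam)
    (ζf ζg u : EuclideanSpace ℝ (Fin d))
    (hζf : ζf ∈ subf xhat) (hζg : ζg ∈ subg xhat) (hu : u ∈ normalCone X xhat)
    (hKKT : ζf + ρh • (xhat - x) + lam • (ζg + ρh • (xhat - x)) + u = 0)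
    (hcs : lam * (g xhat + ρh / 2 * ‖xhat - x‖ ^ 2) = 0) :
    ‖xhat - x‖ ≤ M / ρh ∧ lam ≤ 2 * M / Real.sqrt (2 * θ * (ρh - ρ)) := by
  have hρh : 0 < ρh := hρ0.trans_lt hρ
  have hζfM := hMf xhat hxhatX ζf hζf
  have hux : 0 ≤ ⟪u, xhat - x⟫ := by
    simpa only [← neg_sub xhat x, inner_neg_right, neg_nonpos] using hu x hx
  have hdist := norm_le_div_of_kkt hρh hlam hζfM (hMg xhat hxhatX ζg hζg) hux hKKT
  refine ⟨hdist, ?_⟩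
  rcases hlam.eq_or_lt with rfl | hlam0
  · have : 0 ≤ M := (norm_nonneg _).trans hζfM
    positivity
  have hact : g xhat + ρh / 2 * ‖xhat - x‖ ^ 2 = 0 := (mul_eq_zero.mp hcs).resolve_left hlam0.ne'
  have hwc : IsSubgradientOn (-ρ) g X xhat ζg := fun z hz ↦ by
    linarith [hgwc xhat hxhatX ζg hζg z hz]
  have hw := (hwc.add_half_mul_sq_norm_sub ρh x).add_smul_of_normal hu (inv_nonneg.2 hlam)
  rw [neg_add_eq_sub] at hw
  set w := ζg + ρh • (xhat - x) + lam⁻¹ • u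
  have hlower := hw.sqrt_le_norm (sub_nonneg.2 hρ.le) hθ hy (by linarith)
  have hsmul : lam • w = -(ζf + ρh • (xhat - x)) := by
    rw [smul_add, smul_smul, mul_inv_cancel₀ hlam0.ne', one_smul]
    linear_combination (norm := module) hKKT
  have hupper : lam * ‖w‖ ≤ 2 * M :=
    calc lam * ‖w‖ = ‖ζf + ρh • (xhat - x)‖ := by
          rw [← norm_neg (ζf + _), ← hsmul, norm_smul, Real.norm_of_nonneg hlam]
      _ ≤ ‖ζf‖ + ρh * ‖xhat - x‖ := by
          simpa only [norm_smul, Real.norm_of_nonneg hρh.le] using norm_add_le ζf (ρh • (xhat - x))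
      _ ≤ 2 * M := by linarith [(le_div_iff₀' hρh).mp hdist]
  rw [le_div_iff₀ (Real.sqrt_pos.2 (by nlinarith))]
  exact (mul_le_mul_of_nonneg_left hlower hlam).trans hupper

/-- Lemma 4 of the paper: under the uniform Slater condition,
`‖xhat − x‖ ≤ M/ρ̂` and the KKT multiplier satisfies `λ̂ ≤ 2M/√(2θ(ρ̂ − ρ))`. -/
theorem multiplier_bound_weakly_convex_constraint
    {d : ℕ} (X : Set (EuclideanSpace ℝ (Fin d)))
    (hXc : IsClosed X) (hXconv : Convex ℝ X)
    (f g : EuclideanSpace ℝ (Fin d) → ℝ)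
    (subf subg : EuclideanSpace ℝ (Fin d) → Set (EuclideanSpace ℝ (Fin d)))
    (ρ ρh M θ : ℝ) (hρ0 : 0 ≤ ρ) (hρ : ρ < ρh) (hθ : 0 < θ)
    -- `f` and `g` are `ρ`-weakly convex on `X` (subgradient inequalities)
    (hfwc : ∀ x' ∈ X, ∀ ζ ∈ subf x', ∀ z ∈ X,
      f z ≥ f x' + (inner ℝ ζ (z - x') : ℝ) - ρ / 2 * ‖z - x'‖ ^ 2)
    (hgwc : ∀ x' ∈ X, ∀ ζ ∈ subg x', ∀ z ∈ X,
      g z ≥ g x' + (inner ℝ ζ (z - x') : ℝ) - ρ / 2 * ‖z - x'‖ ^ 2)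
    -- subgradients bounded by `M`
    (hMf : ∀ x ∈ X, ∀ ζ ∈ subf x, ‖ζ‖ ≤ M)
    (hMg : ∀ x ∈ X, ∀ ζ ∈ subg x, ‖ζ‖ ≤ M)
    (x : EuclideanSpace ℝ (Fin d)) (hx : x ∈ X)
    -- uniform Slater point
    (y : EuclideanSpace ℝ (Fin d)) (hy : y ∈ X)
    (hslater : g y + ρh / 2 * ‖y - x‖ ^ 2 ≤ -θ)
    -- `xhat` minimizes `f(z) + (ρ̂/2)‖z − x‖²` over `{z ∈ X : g(z) + (ρ̂/2)‖z − x‖² ≤ 0}`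
    (xhat : EuclideanSpace ℝ (Fin d)) (hxhatX : xhat ∈ X)
    (hxhatfeas : g xhat + ρh / 2 * ‖xhat - x‖ ^ 2 ≤ 0)
    (hmin : ∀ z ∈ X, g z + ρh / 2 * ‖z - x‖ ^ 2 ≤ 0 →
      f xhat + ρh / 2 * ‖xhat - x‖ ^ 2 ≤ f z + ρh / 2 * ‖z - x‖ ^ 2)
    -- KKT conditions with multiplier `lam`
    (lam : ℝ) (hlam : 0 ≤ lam)
    (ζf ζg u : EuclideanSpace ℝ (Fin d))
    (hζf : ζf ∈ subf xhat) (hζg : ζg ∈ subg xhat) (hu : u ∈ normalCone X xhat)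
    (hKKT : ζf + ρh • (xhat - x) + lam • (ζg + ρh • (xhat - x)) + u = 0)
    (hcs : lam * (g xhat + ρh / 2 * ‖xhat - x‖ ^ 2) = 0) :
    ‖xhat - x‖ ≤ M / ρh ∧ lam ≤ 2 * M / Real.sqrt (2 * θ * (ρh - ρ)) :=
  multiplier_bound_weakly_convex_constraint_general X g subf subg ρ ρh M θ hρ0 hρ hθ hgwc hMf hMg x
    hx y hy hslater xhat hxhatX lam hlam ζf ζg u hζf hζg hu hKKT hcs
end
end

section
/- Subgradient norm lower bound for convex constraints via Slater and bounded feasible set: let g be convex on closed convex X, suppose g(x_feas) < 0 for some x_feas in the relative interior of X, and suppose ‖x − x'‖ ≤ D for all x, x' in S := {x ∈ X : g(x) ≤ 0}. Then for every x ∈ X with g(x) = 0, every ζ_g ∈ ∂g(x), and every u ∈ N_X(x), one has ‖ζ_g + u‖ ≥ ν' := −g(x_feas)/D > 0. -/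
/-! If `ζ` is a subgradient of `g` at `x` and `u` lies in the normal cone of `X` at `x`, then
`ζ + u` is a subgradient of `g + δ_X` at `x`, so for the Slater point `x_feas`, Cauchy–Schwarz gives
`g(x_feas) - g(x) ≥ ⟨ζ + u, x_feas - x⟩ ≥ -‖ζ + u‖ ‖x_feas - x‖`. With `g(x) = 0` and both points
feasible, `‖x_feas - x‖ ≤ D`, whence `‖ζ + u‖ ≥ -g(x_feas) / D`. -/

noncomputable section

theorem sub_le_norm_mul_norm_of_subgradient_add_normal {E : Type*} [NormedAddCommGroup E]
    [InnerProductSpace ℝ E] {g : E → ℝ} {x z ζ u : E}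
    (hζ : g z ≥ g x + inner ℝ ζ (z - x)) (hu : inner ℝ u (z - x) ≤ 0) :
    g x - g z ≤ ‖ζ + u‖ * ‖z - x‖ := by
  have hinner : inner ℝ (ζ + u) (z - x) ≤ g z - g x := by
    rw [inner_add_left]
    linarith
  have hcs : -(‖ζ + u‖ * ‖z - x‖) ≤ inner ℝ (ζ + u) (z - x) :=
    neg_le_of_abs_le (abs_real_inner_le_norm _ _)
  linarith

theorem subgradient_norm_lower_bound_convex_slater_general
    {d : ℕ} (X : Set (EuclideanSpace ℝ (Fin d)))
    (g : EuclideanSpace ℝ (Fin d) → ℝ)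
    (subg : EuclideanSpace ℝ (Fin d) → Set (EuclideanSpace ℝ (Fin d)))
    -- `g` is convex on `X` (subgradient inequality)
    (hgc : ∀ x' ∈ X, ∀ ζ ∈ subg x', ∀ z ∈ X,
      g z ≥ g x' + (inner ℝ ζ (z - x') : ℝ))
    -- Slater's condition with a point in the relative interior
    (xfeas : EuclideanSpace ℝ (Fin d))
    (hxfeas : xfeas ∈ intrinsicInterior ℝ X) (hslater : g xfeas < 0)
    -- feasible set has diameter at most `D`
    (D : ℝ) (hD : 0 < D)
    (hdiam : ∀ x ∈ X, g x ≤ 0 → ∀ x' ∈ X, g x' ≤ 0 → ‖x - x'‖ ≤ D) :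
    0 < -g xfeas / D ∧
      ∀ x ∈ X, g x = 0 → ∀ ζ ∈ subg x, ∀ u ∈ normalCone X x,
        -g xfeas / D ≤ ‖ζ + u‖ := by
  refine ⟨div_pos (neg_pos.2 hslater) hD, fun x hx hgx ζ hζ u hu => ?_⟩
  have hxfeasX : xfeas ∈ X := intrinsicInterior_subset hxfeas
  rw [div_le_iff₀ hD]
  calc -g xfeas = g x - g xfeas := by rw [hgx, zero_sub]
    _ ≤ ‖ζ + u‖ * ‖xfeas - x‖ :=
      sub_le_norm_mul_norm_of_subgradient_add_normal (hgc x hx ζ hζ xfeas hxfeasX) (hu xfeas hxfeasX)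
    _ ≤ ‖ζ + u‖ * D := by
      gcongr
      exact hdiam xfeas hxfeasX hslater.le x hx hgx.le

/-- subgradient norm lower bound for a convex constraint via
Slater's condition and boundedness of the feasible set `S = {x ∈ X : g x ≤ 0}`:
for all `x ∈ X` with `g x = 0`, all `ζ ∈ ∂g(x)` and `u ∈ N_X(x)`,
`‖ζ + u‖ ≥ ν' := −g(x_feas)/D > 0`. -/
theorem subgradient_norm_lower_bound_convex_slater
    {d : ℕ} (X : Set (EuclideanSpace ℝ (Fin d)))
    (hXc : IsClosed X) (hXconv : Convex ℝ X)
    (g : EuclideanSpace ℝ (Fin d) → ℝ)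
    (subg : EuclideanSpace ℝ (Fin d) → Set (EuclideanSpace ℝ (Fin d)))
    -- `g` is convex on `X` (subgradient inequality)
    (hgc : ∀ x' ∈ X, ∀ ζ ∈ subg x', ∀ z ∈ X,
      g z ≥ g x' + (inner ℝ ζ (z - x') : ℝ))
    -- Slater's condition with a point in the relative interior
    (xfeas : EuclideanSpace ℝ (Fin d))
    (hxfeas : xfeas ∈ intrinsicInterior ℝ X) (hslater : g xfeas < 0)
    -- feasible set has diameter at most `D`
    (D : ℝ) (hD : 0 < D)
    (hdiam : ∀ x ∈ X, g x ≤ 0 → ∀ x' ∈ X, g x' ≤ 0 → ‖x - x'‖ ≤ D) :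
    0 < -g xfeas / D ∧
      ∀ x ∈ X, g x = 0 → ∀ ζ ∈ subg x, ∀ u ∈ normalCone X x,
        -g xfeas / D ≤ ‖ζ + u‖ :=
  subgradient_norm_lower_bound_convex_slater_general X g subg hgc xfeas hxfeas hslater D hD hdiam
end
end
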